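/- With A as above (p ≥ 4, b ∈ [0,1/2)), the spectrum of A consists of exactly the three eigenvalues 1 + 2b(p−2), 1 + b(p−4), and 1 − 2b; the eigenvalue 1 + 2b(p−2) has the all-ones vector as an eigenvector. -/

import Mathlib

/-!
Let `N` be the pair–point incidence matrix. Then `N Nᵀ` has entries `#(e ∩ f)`, so
`A = (1 - 2b) I + b N Nᵀ`, while `Nᵀ N = (p - 2) I + J`. If `A v = μ v` and `w = Nᵀ v`, applying `Nᵀ`
gives `(μ - 1 - b(p - 4)) w = b (∑ w) 𝟙`: either `w = 0` and `μ = 1 - 2b`, or `∑ w = 0` and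
`μ = 1 + b(p - 4)`, or summing over the points gives `μ = 1 + 2b(p - 2)`. The three values are attained
by `𝟙`, by `N (δ_x - δ_y)` and by `δ_{xz} - δ_{xu} - δ_{yz} + δ_{yu}`, which lies in the kernel of `Nᵀ`.
-/

open Finset Matrix

/-- The matrix on unordered pairs from `{1,…,p}`: diagonal `1`, entries `b` for pairs
sharing exactly one element, `0` for disjoint pairs. -/
noncomputable def pairMatrix (p : ℕ) (b : ℝ) :
    Matrix {e : Finset (Fin p) // e.card = 2} {e : Finset (Fin p) // e.card = 2} ℝ :=
  fun e f => if e = f then 1 else if (e.1 ∩ f.1).card = 1 then b else 0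

theorem Matrix.mem_spectrum_iff_exists_mulVec_eq_smul {n K : Type*} [Fintype n] [DecidableEq n]
    [Field K] (A : Matrix n n K) (μ : K) :
    μ ∈ spectrum K A ↔ ∃ v ≠ 0, A *ᵥ v = μ • v := by
  rw [← spectrum_toLin', ← Module.End.hasEigenvalue_iff_mem_spectrum,
    Module.End.hasEigenvalue_iff, Submodule.ne_bot_iff]
  simp only [Module.End.mem_eigenspace_iff, toLin'_apply]
  exact ⟨fun ⟨v, hv, h⟩ => ⟨v, h, hv⟩, fun ⟨v, h, hv⟩ => ⟨v, hv, h⟩⟩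

section Incidence

variable {α R : Type*} [DecidableEq α]

def mkPair {i j : α} (h : i ≠ j) : {e : Finset α // e.card = 2} := ⟨{i, j}, card_pair h⟩

lemma mem_and_mem_iff_eq_mkPair {i j : α} (h : i ≠ j) (e : {e : Finset α // e.card = 2}) :
    i ∈ e.1 ∧ j ∈ e.1 ↔ e = mkPair h := by
  refine ⟨fun hij => Subtype.ext ?_, by rintro rfl; simp [mkPair]⟩
  refine (eq_of_subset_of_card_le ?_ ?_).symm
  · simp [mkPair, insert_subset_iff, hij]
  · simp [mkPair, e.2, card_pair h]

lemma card_inter_eq_two_iff (e f : {e : Finset α // e.card = 2}) : #(e.1 ∩ f.1) = 2 ↔ e = f := by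
  refine ⟨fun h => Subtype.ext ?_, by rintro rfl; simp [e.2]⟩
  have hef : e.1 ∩ f.1 = e.1 := eq_of_subset_of_card_le inter_subset_left (by rw [h, e.2])
  have hfe : e.1 ∩ f.1 = f.1 := eq_of_subset_of_card_le inter_subset_right (by rw [h, f.2])
  rw [← hef, hfe]

variable [Fintype α] [CommRing R]

variable (α R) in
def pairIncidence : Matrix {e : Finset α // e.card = 2} α R :=
  of fun e i => if i ∈ e.1 then 1 else 0

local notation "N" => pairIncidence α R

lemma pairIncidence_mul_transpose_apply (e f : {e : Finset α // e.card = 2}) :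
    (N * Nᵀ) e f = #(e.1 ∩ f.1) := by
  simp [mul_apply, pairIncidence, ← ite_and, ← Finset.mem_inter, Finset.inter_comm]

lemma sum_pairIncidence_mul_pairIncidence {i j : α} (h : i ≠ j) :
    ∑ e, N e i * N e j = 1 := by
  simp only [pairIncidence, of_apply, ite_zero_mul_ite_zero, mul_one, mem_and_mem_iff_eq_mkPair h,
    sum_ite_eq', mem_univ, if_true]

lemma pairIncidence_eq_sum_erase (i : α) (e : {e : Finset α // e.card = 2}) :
    N e i = ∑ j ∈ univ.erase i, N e i * N e j := by
  by_cases hi : i ∈ e.1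
  · simp [pairIncidence, hi, e.2]
  · simp [pairIncidence, hi]

lemma sum_pairIncidence (i : α) : ∑ e, N e i = Fintype.card α - 1 := by
  rw [Finset.sum_congr rfl fun e _ => pairIncidence_eq_sum_erase i e, Finset.sum_comm,
    Finset.sum_congr rfl fun j hj => sum_pairIncidence_mul_pairIncidence (ne_of_mem_erase hj).symm]
  simp [card_erase_of_mem, Nat.cast_sub (Fintype.card_pos_iff.mpr ⟨i⟩)]

lemma pairIncidence_transpose_mul_self :
    Nᵀ * N = ((Fintype.card α : R) - 2) • (1 : Matrix α α R) + of fun _ _ => 1 := by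
  ext i j
  rw [mul_apply]
  simp only [transpose_apply, Matrix.add_apply, Matrix.smul_apply, of_apply, smul_eq_mul]
  rcases eq_or_ne i j with rfl | h
  · have idem : ∀ e, N e i * N e i = N e i := fun e => by
      simp only [pairIncidence, of_apply]; split_ifs <;> simp
    simp only [idem, sum_pairIncidence, one_apply_eq]
    ring
  · rw [sum_pairIncidence_mul_pairIncidence h, one_apply_ne h]
    ring

lemma pairIncidence_transpose_mulVec_mulVec (w : α → R) :
    Nᵀ *ᵥ (N *ᵥ w) = ((Fintype.card α : R) - 2) • w + fun _ => ∑ i, w i := by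
  rw [mulVec_mulVec, pairIncidence_transpose_mul_self, add_mulVec, smul_mulVec, one_mulVec]
  congr 1
  ext
  simp [mulVec, dotProduct]

lemma pairIncidence_mulVec_const (c : R) : N *ᵥ (fun _ => c) = fun _ => 2 * c := by
  ext e
  simp [mulVec, dotProduct, pairIncidence, e.2]

lemma pairIncidence_transpose_mulVec_one :
    Nᵀ *ᵥ (fun _ => 1) = fun _ => (Fintype.card α : R) - 1 := by
  ext i
  simp [mulVec, dotProduct, sum_pairIncidence]

lemma pairIncidence_transpose_mulVec_single {i j : α} (h : i ≠ j) :
    Nᵀ *ᵥ Pi.single (mkPair h) 1 = Pi.single i 1 + Pi.single j 1 := by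
  ext k
  rcases eq_or_ne k i with rfl | hki
  · simp [pairIncidence, mkPair, h]
  · simp [pairIncidence, mkPair, Pi.single_apply, hki]

end Incidence

section PairMatrix

variable {p : ℕ} (b : ℝ)

local notation "N" => pairIncidence (Fin p) ℝ

lemma pairMatrix_eq : pairMatrix p b = (1 - 2 * b) • 1 + b • (N * Nᵀ) := by
  ext e f
  simp only [Matrix.add_apply, Matrix.smul_apply, smul_eq_mul, pairIncidence_mul_transpose_apply,
    pairMatrix]
  rcases eq_or_ne e f with rfl | hef
  · simp only [↓reduceIte, one_apply_eq, mul_one, inter_self, e.2, Nat.cast_ofNat]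
    ring
  · have hle : #(e.1 ∩ f.1) ≤ 2 := (card_le_card inter_subset_left).trans e.2.le
    have hne : #(e.1 ∩ f.1) ≠ 2 := (card_inter_eq_two_iff e f).not.mpr hef
    rw [if_neg hef, one_apply_ne hef]
    interval_cases #(e.1 ∩ f.1) <;> simp_all

lemma pairMatrix_mulVec (v : {e : Finset (Fin p) // e.card = 2} → ℝ) :
    pairMatrix p b *ᵥ v = (1 - 2 * b) • v + b • (N *ᵥ (Nᵀ *ᵥ v)) := by
  rw [pairMatrix_eq, add_mulVec, smul_mulVec, smul_mulVec, one_mulVec, mulVec_mulVec]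

lemma pairMatrix_mulVec_one :
    pairMatrix p b *ᵥ (fun _ => 1) = (1 + 2 * b * ((p : ℝ) - 2)) • fun _ => 1 := by
  ext e
  simp only [pairMatrix_mulVec, pairIncidence_transpose_mulVec_one, Fintype.card_fin,
    pairIncidence_mulVec_const, Pi.add_apply, Pi.smul_apply, smul_eq_mul, mul_one]
  ring

lemma pairMatrix_mulVec_pairIncidence_mulVec (x y : Fin p) :
    pairMatrix p b *ᵥ (N *ᵥ (Pi.single x 1 - Pi.single y 1))
      = (1 + b * ((p : ℝ) - 4)) • (N *ᵥ (Pi.single x 1 - Pi.single y 1)) := by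
  have hsum : ∑ i, (Pi.single x 1 - Pi.single y 1 : Fin p → ℝ) i = 0 := by simp
  rw [pairMatrix_mulVec, pairIncidence_transpose_mulVec_mulVec, hsum, Fintype.card_fin,
    ← Pi.zero_def, add_zero, mulVec_smul, smul_smul, ← add_smul]
  congr 1
  ring

lemma pairMatrix_mulVec_fourCycle {x y z u : Fin p} (hxz : x ≠ z) (hxu : x ≠ u) (hyz : y ≠ z)
    (hyu : y ≠ u) :
    pairMatrix p b *ᵥ (Pi.single (mkPair hxz) 1 - Pi.single (mkPair hxu) 1
        - Pi.single (mkPair hyz) 1 + Pi.single (mkPair hyu) 1)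
      = (1 - 2 * b) • (Pi.single (mkPair hxz) 1 - Pi.single (mkPair hxu) 1
        - Pi.single (mkPair hyz) 1 + Pi.single (mkPair hyu) 1) := by
  have hker : Nᵀ *ᵥ (Pi.single (mkPair hxz) 1 - Pi.single (mkPair hxu) 1
      - Pi.single (mkPair hyz) 1 + Pi.single (mkPair hyu) 1) = 0 := by
    simp only [mulVec_add, mulVec_sub, pairIncidence_transpose_mulVec_single]
    abel
  rw [pairMatrix_mulVec, hker, mulVec_zero, smul_zero, add_zero]

lemma pairMatrix_transpose_mulVec_of_mulVec_eq_smul {μ : ℝ}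
    {v : {e : Finset (Fin p) // e.card = 2} → ℝ} (hAv : pairMatrix p b *ᵥ v = μ • v) (i : Fin p) :
    (μ - (1 + b * ((p : ℝ) - 4))) * (Nᵀ *ᵥ v) i = b * ∑ j, (Nᵀ *ᵥ v) j := by
  have h := congrFun (congrArg (Nᵀ *ᵥ ·) hAv) i
  simp only [pairMatrix_mulVec, mulVec_add, mulVec_smul, pairIncidence_transpose_mulVec_mulVec,
    Fintype.card_fin, Pi.add_apply, Pi.smul_apply, smul_eq_mul] at h
  linear_combination -h

lemma eigenvalue_mem_of_pairMatrix_mulVec_eq_smul {μ : ℝ}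
    {v : {e : Finset (Fin p) // e.card = 2} → ℝ} (hv : v ≠ 0) (hAv : pairMatrix p b *ᵥ v = μ • v) :
    μ ∈ ({1 + 2 * b * ((p : ℝ) - 2), 1 + b * ((p : ℝ) - 4), 1 - 2 * b} : Set ℝ) := by
  have key := pairMatrix_transpose_mulVec_of_mulVec_eq_smul b hAv
  set w := Nᵀ *ᵥ v
  simp only [Set.mem_insert_iff, Set.mem_singleton_iff]
  rcases eq_or_ne w 0 with hw | hw
  · refine .inr (.inr (smul_left_injective ℝ hv ?_))
    change μ • v = (1 - 2 * b) • v
    rw [← hAv, pairMatrix_mulVec, show Nᵀ *ᵥ v = 0 from hw]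
    simp
  obtain ⟨i, hi⟩ := Function.ne_iff.mp hw
  have hsum : (μ - (1 + b * ((p : ℝ) - 4))) * ∑ j, w j = b * p * ∑ j, w j := by
    rw [Finset.mul_sum, Finset.sum_congr rfl fun i _ => key i]
    simp only [sum_const, card_univ, Fintype.card_fin, nsmul_eq_mul]
    ring
  rcases eq_or_ne (∑ j, w j) 0 with hS | hS
  · have := key i
    rw [hS, mul_zero] at this
    exact .inr (.inl (by linarith [(mul_eq_zero.mp this).resolve_right hi]))
  · have := mul_right_cancel₀ hS hsum
    exact .inl (by linarith)

lemma one_add_two_mul_mem_spectrum_pairMatrix (hp : 2 ≤ p) :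
    1 + 2 * b * ((p : ℝ) - 2) ∈ spectrum ℝ (pairMatrix p b) := by
  let ι := Fin.castLE hp
  have h01 : ι 0 ≠ ι 1 := (Fin.castLE_injective hp).ne (by decide)
  refine (mem_spectrum_iff_exists_mulVec_eq_smul _ _).mpr
    ⟨fun _ => 1, Function.ne_iff.mpr ⟨mkPair h01, one_ne_zero⟩, pairMatrix_mulVec_one b⟩

lemma one_add_mul_mem_spectrum_pairMatrix (hp : 3 ≤ p) :
    1 + b * ((p : ℝ) - 4) ∈ spectrum ℝ (pairMatrix p b) := by
  let ι := Fin.castLE hp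
  have h02 : ι 0 ≠ ι 2 := (Fin.castLE_injective hp).ne (by decide)
  have h10 : ι 1 ≠ ι 0 := (Fin.castLE_injective hp).ne (by decide)
  have h12 : ι 1 ≠ ι 2 := (Fin.castLE_injective hp).ne (by decide)
  refine (mem_spectrum_iff_exists_mulVec_eq_smul _ _).mpr
    ⟨_, Function.ne_iff.mpr ⟨mkPair h02, ?_⟩, pairMatrix_mulVec_pairIncidence_mulVec b (ι 0) (ι 1)⟩
  simp [mulVec_sub, pairIncidence, mkPair, h10, h12]

lemma one_sub_two_mul_mem_spectrum_pairMatrix (hp : 4 ≤ p) :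
    1 - 2 * b ∈ spectrum ℝ (pairMatrix p b) := by
  let ι := Fin.castLE hp
  have h02 : ι 0 ≠ ι 2 := (Fin.castLE_injective hp).ne (by decide)
  have h03 : ι 0 ≠ ι 3 := (Fin.castLE_injective hp).ne (by decide)
  have h12 : ι 1 ≠ ι 2 := (Fin.castLE_injective hp).ne (by decide)
  have h13 : ι 1 ≠ ι 3 := (Fin.castLE_injective hp).ne (by decide)
  refine (mem_spectrum_iff_exists_mulVec_eq_smul _ _).mpr
    ⟨_, Function.ne_iff.mpr ⟨mkPair h02, ?_⟩, pairMatrix_mulVec_fourCycle b h02 h03 h12 h13⟩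
  simp only [Pi.add_apply, Pi.sub_apply, Pi.single_apply, ← mem_and_mem_iff_eq_mkPair]
  simp [mkPair, ι, (Fin.castLE_injective hp).eq_iff]

lemma spectrum_pairMatrix_subset :
    spectrum ℝ (pairMatrix p b) ⊆ {1 + 2 * b * ((p : ℝ) - 2), 1 + b * ((p : ℝ) - 4), 1 - 2 * b} :=
  fun _ hμ =>
    let ⟨_, hv, hAv⟩ := (mem_spectrum_iff_exists_mulVec_eq_smul _ _).mp hμ
    eigenvalue_mem_of_pairMatrix_mulVec_eq_smul b hv hAv

end PairMatrix

theorem stmt3_general (p : ℕ) (hp : 4 ≤ p) (b : ℝ) :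
    spectrum ℝ (pairMatrix p b)
      = {1 + 2 * b * ((p : ℝ) - 2), 1 + b * ((p : ℝ) - 4), 1 - 2 * b} ∧
    (pairMatrix p b).mulVec (fun _ => 1)
      = (1 + 2 * b * ((p : ℝ) - 2)) •
          ((fun _ => 1) : {e : Finset (Fin p) // e.card = 2} → ℝ) := by
  refine ⟨(spectrum_pairMatrix_subset b).antisymm ?_, pairMatrix_mulVec_one b⟩
  rintro μ (rfl | rfl | rfl)
  · exact one_add_two_mul_mem_spectrum_pairMatrix b (by omega)
  · exact one_add_mul_mem_spectrum_pairMatrix b (by omega)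
  · exact one_sub_two_mul_mem_spectrum_pairMatrix b hp

theorem stmt3 (p : ℕ) (hp : 4 ≤ p) (b : ℝ) (hb0 : 0 ≤ b) (hb : b < 1 / 2) :
    spectrum ℝ (pairMatrix p b)
      = {1 + 2 * b * ((p : ℝ) - 2), 1 + b * ((p : ℝ) - 4), 1 - 2 * b} ∧
    (pairMatrix p b).mulVec (fun _ => 1)
      = (1 + 2 * b * ((p : ℝ) - 2)) •
          ((fun _ => 1) : {e : Finset (Fin p) // e.card = 2} → ℝ) :=
  stmt3_general p hp b
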